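/- arXiv:1505.07508 — 2 statements merged into one kernel-verified Lean document; each statement's English description precedes it below -/
import Mathlib

section
/- Let A be a finite NM algebra and let ν : A → ℝ be its idempotent Euler characteristic. Then ν(x⊙x) = ν(x) for every x ∈ A. -/
/-- A valuation on a lattice: ν(x)+ν(y) = ν(x⊔y)+ν(x⊓y). -/
def IsValuation {α : Type*} [Lattice α] (ν : α → ℝ) : Prop :=
  ∀ x y : α, ν x + ν y = ν (x ⊔ y) + ν (x ⊓ y)

/-- Join-irreducible element of a lattice with bottom. -/
def JoinIrred {α : Type*} [Lattice α] [OrderBot α] (x : α) : Prop :=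
  x ≠ ⊥ ∧ ∀ y z : α, x = y ⊔ z → x = y ∨ x = z

/-- An NM algebra: a bounded distributive lattice with a commutative monoidal
operation `odot` (unit ⊤) and its residuum `himp`, satisfying prelinearity,
the weak nilpotent minimum law and involutivity of the negation ¬x = x → ⊥. -/
class NMAlgebra (α : Type*) extends DistribLattice α, BoundedOrder α where
  odot : α → α → α
  himp : α → α → α
  odot_comm : ∀ x y : α, odot x y = odot y x
  odot_assoc : ∀ x y z : α, odot (odot x y) z = odot x (odot y z)
  odot_top : ∀ x : α, odot x ⊤ = x
  residuation : ∀ x y z : α, odot x y ≤ z ↔ x ≤ himp y z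
  prelinearity : ∀ x y : α, himp x y ⊔ himp y x = ⊤
  wnm : ∀ x y : α, himp (odot x y) ⊥ ⊔ himp (x ⊓ y) (odot x y) = ⊤
  involution : ∀ x : α, himp (himp x ⊥) ⊥ = x

/-- Negation in an NM algebra: ¬x = x → ⊥. -/
def NMAlgebra.neg {α : Type*} [NMAlgebra α] (x : α) : α := NMAlgebra.himp x ⊥

/-- A filter of an NM algebra: a nonempty upper set closed under ⊙. -/
def NMAlgebra.IsFilter {α : Type*} [NMAlgebra α] (S : Set α) : Prop :=
  S.Nonempty ∧ (∀ x y : α, x ∈ S → x ≤ y → y ∈ S) ∧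
    ∀ x y : α, x ∈ S → y ∈ S → NMAlgebra.odot x y ∈ S

/-- A prime filter: a proper filter such that x⊔y ∈ S implies x ∈ S or y ∈ S. -/
def NMAlgebra.IsPrimeFilter {α : Type*} [NMAlgebra α] (S : Set α) : Prop :=
  NMAlgebra.IsFilter S ∧ S ≠ Set.univ ∧ ∀ x y : α, x ⊔ y ∈ S → x ∈ S ∨ y ∈ S

/-- A maximal prime filter: a prime filter maximal w.r.t. inclusion among proper filters. -/
def NMAlgebra.IsMaximalPrimeFilter {α : Type*} [NMAlgebra α] (S : Set α) : Prop :=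
  NMAlgebra.IsPrimeFilter S ∧
    ∀ T : Set α, NMAlgebra.IsFilter T → T ≠ Set.univ → S ⊆ T → T = S

/-- The idempotent Euler characteristic: the valuation with ν(⊥)=0, ν(g)=1 on
idempotent join-irreducibles and ν(g)=0 on the other join-irreducibles. -/
def IsIdemEuler {α : Type*} [NMAlgebra α] (ν : α → ℝ) : Prop :=
  IsValuation ν ∧ ν ⊥ = 0 ∧
    ∀ g : α, JoinIrred g →
      (NMAlgebra.odot g g = g → ν g = 1) ∧ (NMAlgebra.odot g g ≠ g → ν g = 0)

/-- Negation on the three-element NM chain 𝟯 = {0, ½, 1}, modelled as `Fin 3`. -/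
def neg3 : Fin 3 → Fin 3 := ![2, 1, 0]

/-- The monoidal operation of 𝟯: x⊙y = min(x,y) if x > ¬y, and 0 otherwise. -/
def odot3 (x y : Fin 3) : Fin 3 := if neg3 y < x then min x y else 0

/-- The residuum of 𝟯: x→y = 1 if x ≤ y, and max(¬x,y) otherwise. -/
def himp3 (x y : Fin 3) : Fin 3 := if x ≤ y then 2 else max (neg3 x) y

/-- NM homomorphisms into the three-element NM chain 𝟯 (as `Fin 3`, top element `2`). -/
def IsHom3 {α : Type*} [NMAlgebra α] (h : α → Fin 3) : Prop :=
  h ⊥ = 0 ∧ h ⊤ = 2 ∧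
  (∀ x y : α, h (x ⊓ y) = min (h x) (h y)) ∧
  (∀ x y : α, h (x ⊔ y) = max (h x) (h y)) ∧
  (∀ x y : α, h (NMAlgebra.odot x y) = odot3 (h x) (h y)) ∧
  (∀ x y : α, h (NMAlgebra.himp x y) = himp3 (h x) (h y))

/-- Negation on the two-element NM chain 𝟚 = {0, 1}, modelled as `Fin 2`. -/
def neg2 : Fin 2 → Fin 2 := ![1, 0]

/-- The monoidal operation of 𝟚 is ∧ (Boolean). -/
def odot2 (x y : Fin 2) : Fin 2 := min x y

/-- The residuum of 𝟚: Boolean implication x→y = max(¬x, y). -/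
def himp2 (x y : Fin 2) : Fin 2 := max (neg2 x) y

/-- NM homomorphisms into the two-element NM chain 𝟚 (as `Fin 2`, top element `1`). -/
def IsHom2 {α : Type*} [NMAlgebra α] (h : α → Fin 2) : Prop :=
  h ⊥ = 0 ∧ h ⊤ = 1 ∧
  (∀ x y : α, h (x ⊓ y) = min (h x) (h y)) ∧
  (∀ x y : α, h (x ⊔ y) = max (h x) (h y)) ∧
  (∀ x y : α, h (NMAlgebra.odot x y) = odot2 (h x) (h y)) ∧
  (∀ x y : α, h (NMAlgebra.himp x y) = himp2 (h x) (h y))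

/-- The nilpotent minimum t-norm on ℝ (intended on [0,1]). -/
noncomputable def nmT (x y : ℝ) : ℝ := if 1 < x + y then min x y else 0

/-- The residuum of the nilpotent minimum t-norm on ℝ (intended on [0,1]). -/
noncomputable def nmImp (x y : ℝ) : ℝ := if x ≤ y then 1 else max (1 - x) y

section NMHelp
open NMAlgebra
variable {A : Type*} [NMAlgebra A]

lemma odot_mono_left {a b : A} (c : A) (h : a ≤ b) : odot a c ≤ odot b c := by
  rw [residuation]
  exact le_trans h ((residuation b c (odot b c)).mp le_rfl)

lemma odot_mono {a b c d : A} (h1 : a ≤ b) (h2 : c ≤ d) : odot a c ≤ odot b d := by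
  refine le_trans (odot_mono_left c h1) ?_
  rw [odot_comm b c, odot_comm b d]
  exact odot_mono_left b h2

lemma odot_le_left (x y : A) : odot x y ≤ x := by
  have := odot_mono (le_refl x) (le_top (a := y))
  rwa [odot_top] at this

lemma odot_neg_bot (x : A) : odot x (himp x ⊥) = ⊥ := by
  apply le_bot_iff.mp
  rw [odot_comm, residuation]

lemma le_sq_sup_neg (x : A) : x ≤ odot x x ⊔ himp x ⊥ := by
  set s := odot x x with hs
  have h1 : odot (himp x s) x ≤ s := (residuation _ _ _).mpr le_rfl
  have h2 : odot (himp s ⊥) x ≤ himp x ⊥ := by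
    have key : odot (odot (himp s ⊥) x) x ≤ ⊥ := by
      rw [odot_assoc, ← hs, odot_comm, residuation, involution]
    exact (residuation _ _ _).mp key
  have hw := wnm x x
  rw [inf_idem, ← hs] at hw
  calc x = odot (himp s ⊥ ⊔ himp x s) x := by rw [hw, odot_comm, odot_top]
  _ ≤ s ⊔ himp x ⊥ := by
      rw [residuation]
      apply sup_le
      · rw [← residuation]
        exact le_trans h2 le_sup_right
      · rw [← residuation]
        exact le_trans h1 le_sup_left

lemma nm_decomp (x : A) : odot x x ⊔ (x ⊓ himp x ⊥) = x := by
  have h1 : odot x x ≤ x := odot_le_left x x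
  apply le_antisymm (sup_le h1 inf_le_left)
  have heq : x = odot x x ⊔ (x ⊓ himp x ⊥) := by
    calc x = x ⊓ (odot x x ⊔ himp x ⊥) := (inf_eq_left.mpr (le_sq_sup_neg x)).symm
    _ = (x ⊓ odot x x) ⊔ (x ⊓ himp x ⊥) := inf_sup_left x _ _
    _ = odot x x ⊔ (x ⊓ himp x ⊥) := by rw [inf_eq_right.mpr h1]
  exact heq.le

lemma val_sq_bot {A : Type*} [NMAlgebra A] [Fintype A] (ν : A → ℝ)
    (hν : IsIdemEuler ν) : ∀ y : A, NMAlgebra.odot y y = ⊥ → ν y = 0 := by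
  obtain ⟨hval, hbot, hji⟩ := hν
  intro y
  induction y using WellFoundedLT.induction with
  | ind y IH =>
    intro hy
    by_cases hb : y = ⊥
    · rw [hb]; exact hbot
    by_cases hjir : JoinIrred y
    · exact (hji y hjir).2 (by rw [hy]; exact Ne.symm hb)
    · have : ∃ a b : A, y = a ⊔ b ∧ y ≠ a ∧ y ≠ b := by
        rw [JoinIrred, not_and] at hjir
        push_neg at hjir
        exact hjir hb
      obtain ⟨a, b, hab, hna, hnb⟩ := this
      have ha : a < y := lt_of_le_of_ne (hab ▸ le_sup_left) (Ne.symm hna)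
      have hb' : b < y := lt_of_le_of_ne (hab ▸ le_sup_right) (Ne.symm hnb)
      have sq : ∀ z : A, z ≤ y → odot z z = ⊥ := fun z hz =>
        le_bot_iff.mp (hy ▸ odot_mono hz hz)
      have hva : ν a = 0 := IH a ha (sq a ha.le)
      have hvb : ν b = 0 := IH b hb' (sq b hb'.le)
      have hvi : ν (a ⊓ b) = 0 :=
        IH (a ⊓ b) (lt_of_le_of_lt inf_le_left ha) (sq _ (le_trans inf_le_left ha.le))
      have := hval a b
      rw [hva, hvb, hvi, ← hab] at this
      linarith

end NMHelp

/-- the idempotent Euler characteristic satisfies χ⁺(x⊙x) = χ⁺(x). -/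
theorem stmt4 {A : Type*} [NMAlgebra A] [Fintype A] (ν : A → ℝ)
    (hν : IsIdemEuler ν) (x : A) :
    ν (NMAlgebra.odot x x) = ν x := by
  obtain ⟨hval, hbot, hji⟩ := hν
  set s := NMAlgebra.odot x x with hs
  set w := x ⊓ NMAlgebra.himp x ⊥ with hw
  have hwsq : NMAlgebra.odot w w = ⊥ := by
    apply le_bot_iff.mp
    calc NMAlgebra.odot w w ≤ NMAlgebra.odot x (NMAlgebra.himp x ⊥) :=
      odot_mono inf_le_left inf_le_right
    _ = ⊥ := odot_neg_bot x
  have hisq : NMAlgebra.odot (s ⊓ w) (s ⊓ w) = ⊥ :=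
    le_bot_iff.mp (hwsq ▸ odot_mono inf_le_right inf_le_right)
  have hvw : ν w = 0 := val_sq_bot ν ⟨hval, hbot, hji⟩ w hwsq
  have hvi : ν (s ⊓ w) = 0 := val_sq_bot ν ⟨hval, hbot, hji⟩ _ hisq
  have := hval s w
  rw [hvw, hvi, nm_decomp x] at this
  linarith
end

section
/- Let A be a finite NM algebra and let g ∈ A be a minimal idempotent join-irreducible element (g is join-irreducible, g⊙g = g, and there is no join-irreducible g' with g'⊙g' = g' and g' < g). Then the upper set ↑g = {x ∈ A : x ≥ g} is a prime filter of A that is maximal with respect to inclusion among proper filters of A. -/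
/-!
A proper filter `T` of a finite NM algebra is principal, `T = ↑m` with `m = ⋀ T`, and `m` is a
nonzero idempotent because `m ⊙ m ∈ T`. Writing `m` as a join of join-irreducibles and taking a
maximal one `j`, join-primeness of `j` in the distributive lattice together with
`m = m ⊙ m = ⋁ᵢ i ⊙ m` forces `j ≤ j ⊙ m`, and then likewise `j ≤ j ⊙ j`: every nonzero idempotent
lies above an idempotent join-irreducible. If `↑g ⊆ T = ↑m`, then `j ≤ m ≤ g`, so `j = g` by
minimality of `g`, hence `T = ↑g`. Primeness of `↑g` is join-primeness of `g`.
-/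

theorem joinIrred_iff_supIrred {α : Type*} [Lattice α] [OrderBot α] {x : α} :
    JoinIrred x ↔ SupIrred x :=
  ⟨fun h => ⟨fun hmin => h.1 hmin.eq_bot, fun _ _ hyz => (h.2 _ _ hyz.symm).imp Eq.symm Eq.symm⟩,
    fun h => ⟨h.ne_bot, fun _ _ hyz => (h.2 hyz.symm).imp Eq.symm Eq.symm⟩⟩

namespace NMAlgebra

variable {A : Type*} [NMAlgebra A]

theorem odot_mono_left {x y : A} (z : A) (h : x ≤ y) : odot x z ≤ odot y z :=
  (residuation x z _).2 (h.trans ((residuation y z _).1 le_rfl))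

theorem odot_mono_right (x : A) {y z : A} (h : y ≤ z) : odot x y ≤ odot x z := by
  rw [odot_comm x y, odot_comm x z]
  exact odot_mono_left x h

theorem odot_le_left (x y : A) : odot x y ≤ x :=
  calc odot x y ≤ odot x ⊤ := odot_mono_right x le_top
    _ = x := odot_top x

theorem odot_le_right (x y : A) : odot x y ≤ y :=
  odot_comm x y ▸ odot_le_left y x

theorem bot_odot (x : A) : odot ⊥ x = ⊥ :=
  le_bot_iff.1 (odot_le_left ⊥ x)

theorem sup_odot (x y z : A) : odot (x ⊔ y) z = odot x z ⊔ odot y z := by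
  refine le_antisymm ((residuation _ _ _).2 (sup_le ?_ ?_))
    (sup_le (odot_mono_left z le_sup_left) (odot_mono_left z le_sup_right))
  · exact (residuation _ _ _).1 le_sup_left
  · exact (residuation _ _ _).1 le_sup_right

theorem finsetSup_odot {ι : Type*} (s : Finset ι) (f : ι → A) (x : A) :
    odot (s.sup f) x = s.sup fun i => odot (f i) x := by
  classical
  induction s using Finset.induction with
  | empty => exact bot_odot x
  | insert i s _ ih => rw [Finset.sup_insert, Finset.sup_insert, sup_odot, ih]

theorem IsFilter.inf_mem {S : Set A} (hS : IsFilter S) {x y : A} (hx : x ∈ S) (hy : y ∈ S) :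
    x ⊓ y ∈ S :=
  hS.2.1 _ _ (hS.2.2 x y hx hy) (le_inf (odot_le_left x y) (odot_le_right x y))

theorem isFilter_Ici {g : A} (hg : odot g g = g) : IsFilter (Set.Ici g) := by
  refine ⟨⟨g, le_rfl⟩, fun x y hx hxy => le_trans hx hxy, fun x y hx hy => ?_⟩
  calc g = odot g g := hg.symm
    _ ≤ odot x g := odot_mono_left g hx
    _ ≤ odot x y := odot_mono_right x hy

theorem isPrimeFilter_Ici {g : A} (hg : JoinIrred g) (hid : odot g g = g) :
    IsPrimeFilter (Set.Ici g) := by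
  have hprime : SupPrime g := supPrime_iff_supIrred.2 (joinIrred_iff_supIrred.1 hg)
  refine ⟨isFilter_Ici hid, fun h => hg.1 (le_bot_iff.1 (Set.eq_univ_iff_forall.1 h ⊥)),
    fun x y hxy => hprime.le_sup.1 hxy⟩

theorem IsFilter.exists_eq_Ici [Finite A] {T : Set A} (hT : IsFilter T) :
    ∃ m, odot m m = m ∧ T = Set.Ici m := by
  obtain ⟨m, hm⟩ := T.toFinite.exists_minimal hT.1
  have hle : ∀ t ∈ T, m ≤ t := fun t ht =>
    (hm.le_of_le (hT.inf_mem hm.prop ht) inf_le_left).trans inf_le_right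
  refine ⟨m, le_antisymm (odot_le_left m m) (hle _ (hT.2.2 m m hm.prop hm.prop)), ?_⟩
  exact Set.ext fun t => ⟨hle t, fun ht => hT.2.1 m t hm.prop ht⟩

theorem exists_idempotent_joinIrred_le [Finite A] {m : A} (hm : odot m m = m) (hm0 : m ≠ ⊥) :
    ∃ j, JoinIrred j ∧ odot j j = j ∧ j ≤ m := by
  obtain ⟨u, hu_sup, hu_irred⟩ := exists_supIrred_decomposition m
  have hu : u.Nonempty := Finset.nonempty_iff_ne_empty.2 fun h => hm0 (by simp [← hu_sup, h])
  obtain ⟨j, hj⟩ := u.exists_maximal hu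
  have hjm : j ≤ m := hu_sup ▸ Finset.le_sup (f := id) hj.prop
  have hj_irred := hu_irred hj.prop
  have absorb : ∀ x, j ≤ odot m x → j ≤ odot j x := by
    intro x h
    rw [← hu_sup, finsetSup_odot, (supPrime_iff_supIrred.2 hj_irred).le_finset_sup] at h
    obtain ⟨i, hi, hji⟩ := h
    obtain rfl := hj.eq_of_ge hi (hji.trans (odot_le_left i x))
    exact hji
  have hjj : j ≤ odot j j := by
    have hjjm : j ≤ odot j m := absorb m (hm.symm ▸ hjm)
    exact absorb j (odot_comm j m ▸ hjjm)
  exact ⟨j, joinIrred_iff_supIrred.2 hj_irred, le_antisymm (odot_le_left j j) hjj, hjm⟩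

end NMAlgebra

/-- the upper set of a minimal idempotent join-irreducible element
of a finite NM algebra is a maximal prime filter. -/
theorem stmt10 {A : Type*} [NMAlgebra A] [Fintype A] (g : A) (hg : JoinIrred g)
    (hid : NMAlgebra.odot g g = g)
    (hmin : ¬ ∃ g' : A, JoinIrred g' ∧ NMAlgebra.odot g' g' = g' ∧ g' < g) :
    NMAlgebra.IsMaximalPrimeFilter {x : A | g ≤ x} := by
  refine ⟨NMAlgebra.isPrimeFilter_Ici hg hid, fun T hT hT_ne hsub => ?_⟩
  obtain ⟨m, hm, rfl⟩ := hT.exists_eq_Ici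
  have hm0 : m ≠ ⊥ := fun h => hT_ne (Set.eq_univ_of_forall fun x => h ▸ bot_le)
  obtain ⟨j, hj, hjj, hjm⟩ := NMAlgebra.exists_idempotent_joinIrred_le hm hm0
  have hmg : m ≤ g := hsub (le_refl g)
  have hjg : j = g := by
    by_contra hne
    exact hmin ⟨j, hj, hjj, lt_of_le_of_ne (hjm.trans hmg) hne⟩
  exact le_antisymm (Set.Ici_subset_Ici.2 (hjg ▸ hjm)) hsub
end
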